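/- Let κ > 0, μ ≥ 1, τ_d > 0. Let t : ℕ → ℝ be a sequence with t(0) = 0 and t(i+1) − t(i) ≥ τ_d for all i ∈ ℕ. Let a : ℕ → [0,∞) satisfy a(i+1) ≤ μ·e^{-κ(t(i+1) − t(i))}·a(i) for all i. Let W : [0,∞) → [0,∞) be a function such that for every i ∈ ℕ and every s ∈ [t(i), t(i+1)], W(s) ≤ a(i)·e^{-κ(s − t(i))}. Then for every i ∈ ℕ and every s ∈ [t(i), t(i+1)], W(s) ≤ e^{((log μ)/τ_d − κ)·s}·a(0). -/

import Mathlib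

/-!
Iterating the jump inequality gives `a i ≤ μ ^ i * exp (-κ * t i) * a 0`, and the in-mode decay
turns this into `W s ≤ μ ^ i * exp (-κ * s) * a 0` on `[t i, t (i + 1)]`. The dwell time bounds the
number of switches before `s`: `i * τ_d ≤ t i ≤ s`, so `μ ^ i ≤ exp (log μ / τ_d * s)`.
-/

open Real

theorem le_pow_mul_exp_mul_of_le_mul_exp {κ μ : ℝ} (hμ : 0 ≤ μ) {t a : ℕ → ℝ}
    (hrec : ∀ i, a (i + 1) ≤ μ * exp (-κ * (t (i + 1) - t i)) * a i) (n : ℕ) :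
    a n ≤ μ ^ n * exp (-κ * (t n - t 0)) * a 0 := by
  induction n with
  | zero => simp
  | succ n ih =>
    calc a (n + 1) ≤ μ * exp (-κ * (t (n + 1) - t n)) * a n := hrec n
      _ ≤ μ * exp (-κ * (t (n + 1) - t n)) * (μ ^ n * exp (-κ * (t n - t 0)) * a 0) := by
          gcongr
      _ = μ ^ (n + 1) * exp (-κ * (t (n + 1) - t 0)) * a 0 := by
          rw [show -κ * (t (n + 1) - t 0) = -κ * (t (n + 1) - t n) + -κ * (t n - t 0) by ring,
            exp_add]
          ring

theorem nat_mul_le_sub_of_forall_le_sub_succ {τ : ℝ} {t : ℕ → ℝ}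
    (hdwell : ∀ i, τ ≤ t (i + 1) - t i) (n : ℕ) : n * τ ≤ t n - t 0 := by
  induction n with
  | zero => simp
  | succ n ih =>
    push_cast
    linarith [hdwell n]

theorem pow_le_exp_log_div_mul {μ τ s : ℝ} (hμ : 1 ≤ μ) (hτ : 0 < τ) {n : ℕ}
    (hn : n * τ ≤ s) : μ ^ n ≤ exp (log μ / τ * s) := by
  have hlog : n * log μ ≤ log μ / τ * s := by
    rw [div_mul_eq_mul_div, le_div_iff₀ hτ]
    nlinarith [log_nonneg hμ]
  calc μ ^ n = exp (n * log μ) := by rw [exp_nat_mul, exp_log (by linarith)]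
    _ ≤ exp (log μ / τ * s) := exp_le_exp.2 hlog

theorem stmt_4_general (κ μ τd : ℝ) (hμ : 1 ≤ μ) (hτd : 0 < τd)
    (t : ℕ → ℝ) (ht0 : t 0 = 0) (hdwell : ∀ i, τd ≤ t (i + 1) - t i)
    (a : ℕ → ℝ) (ha : ∀ i, 0 ≤ a i)
    (hrec : ∀ i, a (i + 1) ≤ μ * Real.exp (-κ * (t (i + 1) - t i)) * a i)
    (W : ℝ → ℝ)
    (hW : ∀ i, ∀ s ∈ Set.Icc (t i) (t (i + 1)),
      W s ≤ a i * Real.exp (-κ * (s - t i))) :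
    ∀ i, ∀ s ∈ Set.Icc (t i) (t (i + 1)),
      W s ≤ Real.exp ((Real.log μ / τd - κ) * s) * a 0 := by
  intro i s hs
  have ha_i := le_pow_mul_exp_mul_of_le_mul_exp (by linarith) hrec i
  have hswitches : i * τd ≤ s := by
    linarith [nat_mul_le_sub_of_forall_le_sub_succ hdwell i, hs.1]
  rw [ht0, sub_zero] at ha_i
  calc W s ≤ a i * exp (-κ * (s - t i)) := hW i s hs
    _ ≤ μ ^ i * exp (-κ * t i) * a 0 * exp (-κ * (s - t i)) := by gcongr
    _ = μ ^ i * a 0 * exp (-κ * s) := by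
        rw [show -κ * s = -κ * t i + -κ * (s - t i) by ring, exp_add]
        ring
    _ ≤ exp (log μ / τd * s) * a 0 * exp (-κ * s) := by
        gcongr
        · exact ha 0
        · exact pow_le_exp_log_div_mul hμ hτd hswitches
    _ = exp ((log μ / τd - κ) * s) * a 0 := by
        rw [sub_mul, sub_eq_add_neg, exp_add, neg_mul]
        ring

/-- Stability under dwell-time switching: if the switching times satisfy
`t (i+1) − t i ≥ τ_d`, the Lyapunov sequence `a` decays with jump factor `μ`,
and `W` decays exponentially within each mode, then
`W s ≤ e^{((log μ)/τ_d − κ)·s}·a 0` on each interval `[t i, t (i+1)]`. -/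
theorem stmt_4 (κ μ τd : ℝ) (hκ : 0 < κ) (hμ : 1 ≤ μ) (hτd : 0 < τd)
    (t : ℕ → ℝ) (ht0 : t 0 = 0) (hdwell : ∀ i, τd ≤ t (i + 1) - t i)
    (a : ℕ → ℝ) (ha : ∀ i, 0 ≤ a i)
    (hrec : ∀ i, a (i + 1) ≤ μ * Real.exp (-κ * (t (i + 1) - t i)) * a i)
    (W : ℝ → ℝ) (hWnonneg : ∀ s : ℝ, 0 ≤ s → 0 ≤ W s)
    (hW : ∀ i, ∀ s ∈ Set.Icc (t i) (t (i + 1)),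
      W s ≤ a i * Real.exp (-κ * (s - t i))) :
    ∀ i, ∀ s ∈ Set.Icc (t i) (t (i + 1)),
      W s ≤ Real.exp ((Real.log μ / τd - κ) * s) * a 0 :=
  stmt_4_general κ μ τd hμ hτd t ht0 hdwell a ha hrec W hW
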